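/- arXiv:1906.03622 — 3 statements merged into one kernel-verified Lean document; each statement's English description precedes it below -/
import Mathlib

section
/- Suppose a positive sequence (a_k) with A_k = a_1 + ... + a_k, A_0 = 0, satisfies a_{k+1}²/(2 A_{k+1}) ≥ 1/(2Ln) for all k ≥ 0 (with L, n > 0), where a_{k+1} is chosen as the largest root of this relation holding with equality, i.e. a_{k+1} = (1 + sqrt(1 + 4 A_k L n))/(2Ln). Then a_k ≥ k/(2Ln) and A_k ≥ (k+1)²/(4Ln) ≥ k²/(4Ln) for all k ≥ 1. -/
/-!
With `c = L n` the recursion reads `2 c a_{k+1} = 1 + √(1 + 4 c A_k)`, so `m² ≤ 4 c A_k` gives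
`m + 1 ≤ 2 c a_{k+1}`. From `4 c A_1 = 4` the bound `(k + 2)² ≤ 4 c A_{k+1}` propagates, since
`4 c A_{k+2} = 4 c A_{k+1} + 2 (2 c a_{k+2}) ≥ (k + 2)² + 2 (k + 3) > (k + 3)²`; fed back with
`m = k` it gives `k + 1 ≤ 2 c a_{k+1}`.
-/

open Finset

section StepSizes

variable {c : ℝ} {a A : ℕ → ℝ}

theorem two_mul_stepSize_succ_eq (hc : 0 < c)
    (ha : ∀ k, a (k + 1) = (1 + √(1 + 4 * A k * c)) / (2 * c)) (k : ℕ) :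
    2 * c * a (k + 1) = 1 + √(1 + 4 * A k * c) := by
  rw [ha k]
  field_simp

theorem add_one_le_two_mul_stepSize_succ_of_sq_le (hc : 0 < c)
    (ha : ∀ k, a (k + 1) = (1 + √(1 + 4 * A k * c)) / (2 * c)) {k : ℕ} {m : ℝ}
    (hm : m ^ 2 ≤ 4 * c * A k) :
    m + 1 ≤ 2 * c * a (k + 1) := by
  have hsqrt : m ≤ √(1 + 4 * A k * c) := Real.le_sqrt_of_sq_le (by linarith)
  rw [two_mul_stepSize_succ_eq hc ha]
  linarith

theorem sq_add_two_le_four_mul_sum_succ (hc : 0 < c)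
    (hA : ∀ k, A k = ∑ i ∈ range k, a (i + 1))
    (ha : ∀ k, a (k + 1) = (1 + √(1 + 4 * A k * c)) / (2 * c)) (k : ℕ) :
    ((k : ℝ) + 2) ^ 2 ≤ 4 * c * A (k + 1) := by
  have hA_succ : ∀ j, A (j + 1) = A j + a (j + 1) := fun j => by
    rw [hA, hA, sum_range_succ]
  induction k with
  | zero =>
    have hA0 : A 0 = 0 := by simp [hA]
    have ha1 := two_mul_stepSize_succ_eq hc ha 0
    norm_num [hA_succ, hA0] at ha1 ⊢
    linarith
  | succ k ih =>
    have hstep := add_one_le_two_mul_stepSize_succ_of_sq_le hc ha ih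
    rw [hA_succ (k + 1)]
    push_cast
    nlinarith

theorem sq_le_four_mul_sum (hc : 0 < c)
    (hA : ∀ k, A k = ∑ i ∈ range k, a (i + 1))
    (ha : ∀ k, a (k + 1) = (1 + √(1 + 4 * A k * c)) / (2 * c)) (k : ℕ) :
    (k : ℝ) ^ 2 ≤ 4 * c * A k := by
  cases k with
  | zero => simp [hA]
  | succ k =>
    have hle : ((k : ℝ) + 1) ^ 2 ≤ ((k : ℝ) + 2) ^ 2 := by gcongr; norm_num
    push_cast
    exact hle.trans (sq_add_two_le_four_mul_sum_succ hc hA ha k)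

theorem add_one_le_two_mul_stepSize_succ (hc : 0 < c)
    (hA : ∀ k, A k = ∑ i ∈ range k, a (i + 1))
    (ha : ∀ k, a (k + 1) = (1 + √(1 + 4 * A k * c)) / (2 * c)) (k : ℕ) :
    (k : ℝ) + 1 ≤ 2 * c * a (k + 1) :=
  add_one_le_two_mul_stepSize_succ_of_sq_le hc ha (sq_le_four_mul_sum hc hA ha k)

end StepSizes

/-- Growth of the accumulated step sizes `A_k` in the accelerated scheme. -/
theorem stmt3 (L : ℝ) (n : ℕ) (hL : 0 < L) (hn : 1 ≤ n)
    (a A : ℕ → ℝ)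
    (hA : ∀ k : ℕ, A k = ∑ i ∈ Finset.range k, a (i + 1))
    (ha : ∀ k : ℕ,
      a (k + 1) = (1 + Real.sqrt (1 + 4 * A k * L * n)) / (2 * L * n)) :
    ∀ k : ℕ, 1 ≤ k →
      a k ≥ (k : ℝ) / (2 * L * n) ∧
      A k ≥ ((k : ℝ) + 1) ^ 2 / (4 * L * n) ∧
      ((k : ℝ) + 1) ^ 2 / (4 * L * n) ≥ (k : ℝ) ^ 2 / (4 * L * n) := by
  have hc : 0 < L * n := mul_pos hL (by exact_mod_cast hn)
  have ha' : ∀ k, a (k + 1) = (1 + √(1 + 4 * A k * (L * n))) / (2 * (L * n)) := fun k => by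
    rw [ha k, mul_assoc (4 * A k), mul_assoc 2]
  intro k hk
  obtain ⟨k, rfl⟩ : ∃ j, k = j + 1 := ⟨k - 1, by omega⟩
  push_cast
  refine ⟨?_, ?_, ?_⟩
  · rw [ge_iff_le, div_le_iff₀ (by positivity)]
    linarith [add_one_le_two_mul_stepSize_succ hc hA ha' k]
  · rw [ge_iff_le, div_le_iff₀ (by positivity)]
    linarith [sq_add_two_le_four_mul_sum_succ hc hA ha' k]
  · gcongr
    linarith
end

section
/- If f is γ-strongly convex on Q with respect to a norm ‖·‖_E, then the dual function φ(λ) = ⟨λ, b⟩ + max_{x∈Q}(-f(x) - ⟨Aᵀλ, x⟩) is L-smooth with L ≤ ‖A‖²_{E→H}/γ, where ‖A‖_{E→H} is the operator norm of A. -/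
/-!
For each `λ` the problem `min_{x ∈ Q} f x + ⟪λ, A x⟫` has a solution `x λ`: strong convexity makes
the objective coercive. A strongly convex function exceeds its minimum by at least
`γ / 2 * ‖y - x λ‖ ^ 2`; comparing the problems at `λ` and `μ` this way gives
`γ * ‖x μ - x λ‖ ≤ ‖A‖ * ‖μ - λ‖`. Minimality alone squeezes `φ` between its linearizations
at `λ` with slopes `b - A (x λ)` and `b - A (x μ)` (Danskin), so `∇φ λ = b - A (x λ)`,
which is `‖A‖ ^ 2 / γ`-Lipschitz.
-/

open scoped RealInnerProductSpace
open Set Filter Topology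

section StrongConvexity

variable {E : Type*} [NormedAddCommGroup E] [NormedSpace ℝ E] {s : Set E} {m : ℝ} {f g : E → ℝ}

lemma StrongConvexOn.add_convexOn (hf : StrongConvexOn s m f) (hg : ConvexOn ℝ s g) :
    StrongConvexOn s m (f + g) := by
  have h := hf.add hg.uniformConvexOn_zero
  rwa [add_zero] at h

lemma StrongConvexOn.add_le_of_isMinOn (hf : StrongConvexOn s m f) {x y : E} (hx : x ∈ s)
    (hmin : IsMinOn f s x) (hy : y ∈ s) : f x + m / 2 * ‖y - x‖ ^ 2 ≤ f y := by
  set c := m / 2 * ‖y - x‖ ^ 2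
  have hseg : ∀ t ∈ Ioo (0 : ℝ) 1, f x + (1 - t) * c ≤ f y := by
    rintro t ⟨ht0, ht1⟩
    have hmin_t := hmin (hf.1 hy hx ht0.le (sub_nonneg.2 ht1.le) (add_sub_cancel t 1))
    have hconv := hf.2 hy hx ht0.le (sub_nonneg.2 ht1.le) (add_sub_cancel t 1)
    simp only [mem_ofPred_eq, smul_eq_mul] at hmin_t hconv
    have : t * (f x + (1 - t) * c) ≤ t * f y := by simp only [c]; linarith
    exact le_of_mul_le_mul_left this ht0
  have hcont : Continuous fun t : ℝ => f x + (1 - t) * c := by fun_prop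
  have hlim : Tendsto (fun t : ℝ => f x + (1 - t) * c) (𝓝[>] 0) (𝓝 (f x + c)) :=
    (hcont.tendsto' 0 _ (by simp)).mono_left nhdsWithin_le_nhds
  exact le_of_tendsto hlim (eventually_of_mem (Ioo_mem_nhdsGT one_pos) hseg)

/-- Along the ray from `x₀` through `x`, strong convexity makes `f` grow quadratically relative to
its values on the compact set `s ∩ sphere x₀ 1`. -/
lemma StrongConvexOn.exists_le_of_le_dist [ProperSpace E] (hf : StrongConvexOn s m f)
    (hm : 0 < m) (hs : IsClosed s) (hfc : ContinuousOn f s) {x₀ : E} (hx₀ : x₀ ∈ s) :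
    ∃ R, ∀ x ∈ s, R ≤ dist x x₀ → f x₀ ≤ f x := by
  obtain ⟨c, hc⟩ : BddBelow (f '' (s ∩ Metric.sphere x₀ 1)) :=
    ((isCompact_sphere x₀ 1).inter_left hs).bddBelow_image (hfc.mono inter_subset_left)
  refine ⟨max 1 (1 + 2 * (f x₀ - c) / m), fun x hx hR => ?_⟩
  set t := dist x x₀
  have ht1 : 1 ≤ t := le_of_max_le_left hR
  have hgrowth : f x₀ - c ≤ m / 2 * (t - 1) := by
    have := le_of_max_le_right hR
    rw [← le_sub_iff_add_le', div_le_iff₀ hm] at this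
    linarith
  have ht0 : 0 < t⁻¹ := inv_pos.2 (by linarith)
  have ht1' : 0 ≤ 1 - t⁻¹ := sub_nonneg.2 (inv_le_one_of_one_le₀ ht1)
  set y := t⁻¹ • x + (1 - t⁻¹) • x₀
  have hy : y ∈ s ∩ Metric.sphere x₀ 1 := by
    refine ⟨hf.1 hx hx₀ ht0.le ht1' (add_sub_cancel _ 1), ?_⟩
    have : y - x₀ = t⁻¹ • (x - x₀) := by simp only [y, sub_smul, one_smul, smul_sub]; abel
    rw [mem_sphere_iff_norm, this, norm_smul, norm_inv, Real.norm_of_nonneg dist_nonneg,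
      ← dist_eq_norm, inv_mul_cancel₀ (by linarith)]
  have hconv := hf.2 hx hx₀ ht0.le ht1' (add_sub_cancel _ 1)
  rw [← dist_eq_norm, smul_eq_mul, smul_eq_mul,
    show t⁻¹ * (1 - t⁻¹) * (m / 2 * t ^ 2) = m / 2 * (t - 1) by field_simp] at hconv
  have hcy : c ≤ f y := hc (mem_image_of_mem f hy)
  have : 0 ≤ t⁻¹ * (f x - f x₀) := by nlinarith
  linarith [nonneg_of_mul_nonneg_right this ht0]

lemma StrongConvexOn.exists_isMinOn [ProperSpace E] (hf : StrongConvexOn s m f) (hm : 0 < m)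
    (hs : IsClosed s) (hne : s.Nonempty) (hfc : ContinuousOn f s) : ∃ x ∈ s, IsMinOn f s x := by
  obtain ⟨x₀, hx₀⟩ := hne
  obtain ⟨R, hR⟩ := hf.exists_le_of_le_dist hm hs hfc hx₀
  refine hfc.exists_isMinOn' hs hx₀ ?_
  filter_upwards [((tendsto_dist_right_cocompact_atTop x₀).eventually_ge_atTop R).filter_mono
    inf_le_left, mem_inf_of_right (mem_principal_self s)] with x hxR hx using hR x hx hxR

end StrongConvexity

lemma hasGradientAt_of_le_of_le {H : Type*} [NormedAddCommGroup H] [InnerProductSpace ℝ H]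
    [CompleteSpace H] {φ : H → ℝ} {G : H → H} {l : H} (hG : ContinuousAt G l)
    (hlow : ∀ m, φ l + ⟪G l, m - l⟫ ≤ φ m) (hupp : ∀ m, φ m ≤ φ l + ⟪G m, m - l⟫) :
    HasGradientAt φ (G l) l := by
  rw [hasGradientAt_iff_isLittleO]
  have hbound : ∀ m, ‖φ m - φ l - ⟪G l, m - l⟫‖ ≤ ‖‖G m - G l‖ * ‖m - l‖‖ := fun m => by
    have hcs := real_inner_le_norm (G m - G l) (m - l)
    rw [inner_sub_left] at hcs
    rw [Real.norm_of_nonneg (by linarith [hlow m]), Real.norm_of_nonneg (by positivity)]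
    linarith [hupp m]
  have hsmall : (fun m => ‖G m - G l‖) =o[𝓝 l] fun _ => (1 : ℝ) :=
    (Asymptotics.isLittleO_one_iff ℝ).2 (tendsto_iff_norm_sub_tendsto_zero.1 hG)
  refine (Asymptotics.isBigO_of_le _ hbound).trans_isLittleO ?_
  simpa using hsmall.mul_isBigO (Asymptotics.isBigO_refl (fun m => ‖m - l‖) (𝓝 l)) |>.norm_right

section ParametricMinimum

variable {E H : Type*} [NormedAddCommGroup E] [NormedSpace ℝ E] [NormedAddCommGroup H]
  [InnerProductSpace ℝ H] {Q : Set E} {f : E → ℝ} {γ : ℝ} (A : E →L[ℝ] H) {x : H → E}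

lemma StrongConvexOn.add_inner_comp (hf : StrongConvexOn Q γ f) (lam : H) :
    StrongConvexOn Q γ (fun y => f y + ⟪lam, A y⟫) :=
  hf.add_convexOn (((innerSL ℝ lam).comp A).toLinearMap.convexOn hf.1)

lemma StrongConvexOn.mul_norm_sub_le_of_isMinOn_add_inner (hf : StrongConvexOn Q γ f)
    (hxQ : ∀ lam, x lam ∈ Q) (hx : ∀ lam, IsMinOn (fun y => f y + ⟪lam, A y⟫) Q (x lam))
    (l m : H) : γ * ‖x m - x l‖ ≤ ‖A‖ * ‖m - l‖ := by
  have hl := (hf.add_inner_comp A l).add_le_of_isMinOn (hxQ l) (hx l) (hxQ m)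
  have hm := (hf.add_inner_comp A m).add_le_of_isMinOn (hxQ m) (hx m) (hxQ l)
  have hcs : ⟪m - l, A (x l - x m)⟫ ≤ ‖m - l‖ * (‖A‖ * ‖x m - x l‖) := by
    refine (real_inner_le_norm _ _).trans (mul_le_mul_of_nonneg_left ?_ (norm_nonneg _))
    simpa [norm_sub_rev] using A.le_opNorm (x l - x m)
  simp only [map_sub, inner_sub_left, inner_sub_right, norm_sub_rev (x l)] at hl hm hcs
  rcases (norm_nonneg (x m - x l)).eq_or_lt with h0 | hpos
  · rw [← h0, mul_zero]; positivity
  · refine le_of_mul_le_mul_right ?_ hpos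
    nlinarith

/-- Danskin's theorem for the value of a linearly perturbed minimization problem. -/
lemma hasGradientAt_of_isMinOn_add_inner [CompleteSpace H] (b : H)
    (hxQ : ∀ lam, x lam ∈ Q) (hx : ∀ lam, IsMinOn (fun y => f y + ⟪lam, A y⟫) Q (x lam)) {l : H}
    (hc : ContinuousAt (fun lam => A (x lam)) l) :
    HasGradientAt (fun lam => ⟪lam, b⟫ - (f (x lam) + ⟪lam, A (x lam)⟫)) (b - A (x l)) l := by
  refine hasGradientAt_of_le_of_le (G := fun lam => b - A (x lam)) (continuousAt_const.sub hc)
    (fun m => ?_) (fun m => ?_)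
  · have := hx m (hxQ l)
    simp only [mem_ofPred_eq, inner_sub_left, inner_sub_right, real_inner_comm b,
      real_inner_comm (A (x l))] at this ⊢
    linarith
  · have := hx l (hxQ m)
    simp only [mem_ofPred_eq, inner_sub_left, inner_sub_right, real_inner_comm b,
      real_inner_comm (A (x m))] at this ⊢
    linarith

end ParametricMinimum

theorem stmt8_general {dE dH : ℕ}
    (Q : Set (EuclideanSpace ℝ (Fin dE)))
    (hQne : Q.Nonempty) (hQcl : IsClosed Q)
    (f : EuclideanSpace ℝ (Fin dE) → ℝ) (γ : ℝ) (hγ : 0 < γ)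
    (hf : StrongConvexOn Q γ f) (hfc : ContinuousOn f Q)
    (A : EuclideanSpace ℝ (Fin dE) →L[ℝ] EuclideanSpace ℝ (Fin dH))
    (b : EuclideanSpace ℝ (Fin dH))
    (φ : EuclideanSpace ℝ (Fin dH) → ℝ)
    (hφ : ∀ lam, φ lam = ⟪lam, b⟫ + sSup ((fun x => -f x - ⟪lam, A x⟫) '' Q)) :
    Differentiable ℝ φ ∧
      ∀ l1 l2, ‖gradient φ l1 - gradient φ l2‖ ≤ (‖A‖ ^ 2 / γ) * ‖l1 - l2‖ := by
  have hmin : ∀ lam, ∃ x ∈ Q, IsMinOn (fun y => f y + ⟪lam, A y⟫) Q x := fun lam =>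
    (hf.add_inner_comp A lam).exists_isMinOn hγ hQcl hQne (hfc.add (by fun_prop))
  choose x hxQ hx using hmin
  have hφx : φ = fun lam => ⟪lam, b⟫ - (f (x lam) + ⟪lam, A (x lam)⟫) := funext fun lam => by
    rw [hφ, IsGreatest.csSup_eq ⟨mem_image_of_mem _ (hxQ lam), forall_mem_image.2 fun y hy => ?_⟩]
    · ring
    · linarith [isMinOn_iff.1 (hx lam) y hy]
  have hxLip : ∀ l m, ‖x l - x m‖ ≤ ‖A‖ / γ * ‖l - m‖ := fun l m => by
    rw [div_mul_eq_mul_div, le_div_iff₀ hγ, mul_comm]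
    exact hf.mul_norm_sub_le_of_isMinOn_add_inner A hxQ hx m l
  have hLip : ∀ l m, ‖(b - A (x l)) - (b - A (x m))‖ ≤ ‖A‖ ^ 2 / γ * ‖l - m‖ := fun l m => by
    rw [sub_sub_sub_cancel_left, ← map_sub, norm_sub_rev l]
    calc ‖A (x m - x l)‖ ≤ ‖A‖ * (‖A‖ / γ * ‖m - l‖) := A.le_of_opNorm_le_of_le le_rfl (hxLip m l)
      _ = ‖A‖ ^ 2 / γ * ‖m - l‖ := by ring
  have hxcont : Continuous x :=
    (LipschitzWith.of_dist_le_mul (K := ⟨‖A‖ / γ, by positivity⟩) fun l m => by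
      rw [dist_eq_norm, dist_eq_norm]; exact hxLip l m).continuous
  have hgrad : ∀ l, HasGradientAt φ (b - A (x l)) l := fun l => hφx ▸
    hasGradientAt_of_isMinOn_add_inner A b hxQ hx (A.continuous.comp hxcont).continuousAt
  exact ⟨fun l => (hgrad l).differentiableAt, fun l1 l2 => by
    rw [(hgrad l1).gradient, (hgrad l2).gradient]; exact hLip l1 l2⟩

/-- If `f` is `γ`-strongly convex on `Q`, then the dual objective
`φ(λ) = ⟨λ, b⟩ + max_{x ∈ Q} (-f(x) - ⟨Aᵀλ, x⟩)` is `L`-smooth with `L ≤ ‖A‖²/γ`. -/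
theorem stmt8 {dE dH : ℕ}
    (Q : Set (EuclideanSpace ℝ (Fin dE)))
    (hQne : Q.Nonempty) (hQcl : IsClosed Q) (hQcv : Convex ℝ Q)
    (f : EuclideanSpace ℝ (Fin dE) → ℝ) (γ : ℝ) (hγ : 0 < γ)
    (hf : StrongConvexOn Q γ f) (hfc : ContinuousOn f Q)
    (A : EuclideanSpace ℝ (Fin dE) →L[ℝ] EuclideanSpace ℝ (Fin dH))
    (b : EuclideanSpace ℝ (Fin dH))
    (φ : EuclideanSpace ℝ (Fin dH) → ℝ)
    (hφ : ∀ lam, φ lam = ⟪lam, b⟫ + sSup ((fun x => -f x - ⟪lam, A x⟫) '' Q)) :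
    Differentiable ℝ φ ∧
      ∀ l1 l2, ‖gradient φ l1 - gradient φ l2‖ ≤ (‖A‖ ^ 2 / γ) * ‖l1 - l2‖ :=
  stmt8_general Q hQne hQcl f γ hγ hf hfc A b φ hφ
end

section
/- Let (u*, v*) be a stationary point of φ(u,v) = γ(ln(𝟏ᵀB(u,v)𝟏) - ⟨u, r⟩ - ⟨v, c⟩) with B(u,v)_{ij} = exp(u_i + v_j - C_{ij}/γ), 0 ≤ C_{ij} ≤ ‖C‖_∞, and r strictly positive summing to 1. Then max_i u*_i - min_i u*_i ≤ ‖C‖_∞/γ - ln(min_i r_i). -/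
open scoped BigOperators

/-- The entropic OT kernel matrix `B(u,v)_{ij} = exp(u_i + v_j - C_{ij}/γ)`. -/
noncomputable def Bmat {N : ℕ} (γ : ℝ) (C : Matrix (Fin N) (Fin N) ℝ)
    (u v : Fin N → ℝ) : Matrix (Fin N) (Fin N) ℝ :=
  fun i j => Real.exp (u i + v j - C i j / γ)

/-!
Every row sum of `B(u,v)` factors as `exp(u_i) A_i` with `A_i = ∑_j exp(v_j - C_{ij}/γ)`, and
stationarity makes the row sums proportional to `r`. Hence
`exp(u_i - u_{i'}) = (r_i / r_{i'}) (A_{i'} / A_i) ≤ (1 / min r) exp(‖C‖∞/γ)`,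
since `r_i ≤ 1` and the entries of `C` lie in `[0, ‖C‖∞]`.
-/

open Real

lemma sum_exp_sub_div_le_exp_mul_sum {ι : Type*} [Fintype ι] {γ Cmax : ℝ} (hγ : 0 < γ)
    (v c c' : ι → ℝ) (hc' : ∀ j, 0 ≤ c' j) (hc : ∀ j, c j ≤ Cmax) :
    ∑ j, exp (v j - c' j / γ) ≤ exp (Cmax / γ) * ∑ j, exp (v j - c j / γ) := by
  rw [Finset.mul_sum]
  refine Finset.sum_le_sum fun j _ => ?_
  rw [← exp_add, exp_le_exp]
  have : c j / γ ≤ Cmax / γ := by gcongr; exact hc j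
  have : 0 ≤ c' j / γ := div_nonneg (hc' j) hγ.le
  linarith

lemma Bmat_row_sum {N : ℕ} (γ : ℝ) (C : Matrix (Fin N) (Fin N) ℝ) (u v : Fin N → ℝ)
    (i : Fin N) : ∑ j, Bmat γ C u v i j = exp (u i) * ∑ j, exp (v j - C i j / γ) := by
  rw [Finset.mul_sum]
  refine Finset.sum_congr rfl fun j _ => ?_
  rw [Bmat, ← exp_add]
  ring_nf

lemma row_sum_mul_eq_of_stationary {N : ℕ} (B : Matrix (Fin N) (Fin N) ℝ) (r : Fin N → ℝ)
    (hstat : ∀ i, r i = (∑ j, B i j) / (∑ i', ∑ j, B i' j)) (i i' : Fin N) :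
    (∑ j, B i j) * r i' = (∑ j, B i' j) * r i := by
  rw [hstat i, hstat i', mul_div, mul_div, mul_comm]

theorem stmt14_general {N : ℕ} (γ : ℝ) (hγ : 0 < γ)
    (C : Matrix (Fin N) (Fin N) ℝ) (Cmax : ℝ)
    (hC0 : ∀ i j, 0 ≤ C i j) (hCmax : ∀ i j, C i j ≤ Cmax)
    (r : Fin N → ℝ) (rmin : ℝ) (hrmin : 0 < rmin) (hrle : ∀ i, rmin ≤ r i)
    (hr1 : ∑ i, r i = 1)
    (u v : Fin N → ℝ)
    (hstat : ∀ i : Fin N,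
      r i = (∑ j, Bmat γ C u v i j) / (∑ i', ∑ j, Bmat γ C u v i' j)) :
    ∀ i i' : Fin N, u i - u i' ≤ Cmax / γ - Real.log rmin := by
  intro i i'
  set A : Fin N → ℝ := fun k => ∑ j, exp (v j - C k j / γ)
  have hApos : 0 < A i := Finset.sum_pos (fun j _ => exp_pos _) ⟨i, Finset.mem_univ _⟩
  have hAle : A i' ≤ exp (Cmax / γ) * A i :=
    sum_exp_sub_div_le_exp_mul_sum hγ v _ _ (hC0 i') (hCmax i)
  have hri : r i ≤ 1 := hr1 ▸ Finset.single_le_sum (fun k _ => hrmin.le.trans (hrle k))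
    (Finset.mem_univ i)
  have hprop : exp (u i) * A i * r i' = exp (u i') * A i' * r i := by
    simpa only [Bmat_row_sum] using row_sum_mul_eq_of_stationary _ r hstat i i'
  have hexp : exp (u i + log rmin) * A i ≤ exp (u i' + Cmax / γ) * A i :=
    calc exp (u i + log rmin) * A i = exp (u i) * A i * rmin := by
          rw [exp_add, exp_log hrmin]; ring
      _ ≤ exp (u i) * A i * r i' := by gcongr; exact hrle i'
      _ = exp (u i') * A i' * r i := hprop
      _ ≤ exp (u i') * (exp (Cmax / γ) * A i) * 1 := by gcongr; linarith [hrle i]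
      _ = exp (u i' + Cmax / γ) * A i := by rw [exp_add]; ring
  have := exp_le_exp.mp (le_of_mul_le_mul_right hexp hApos)
  linarith

/-- At a stationary point of the dual entropic OT objective, the oscillation of the `u`
variables is bounded: `max u - min u ≤ ‖C‖∞/γ - ln(min_i r_i)`. -/
theorem stmt14 {N : ℕ} (hN : 1 ≤ N) (γ : ℝ) (hγ : 0 < γ)
    (C : Matrix (Fin N) (Fin N) ℝ) (Cmax : ℝ)
    (hC0 : ∀ i j, 0 ≤ C i j) (hCmax : ∀ i j, C i j ≤ Cmax)
    (r : Fin N → ℝ) (rmin : ℝ) (hrmin : 0 < rmin) (hrle : ∀ i, rmin ≤ r i)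
    (hr1 : ∑ i, r i = 1)
    (u v : Fin N → ℝ)
    (hstat : ∀ i : Fin N,
      r i = (∑ j, Bmat γ C u v i j) / (∑ i', ∑ j, Bmat γ C u v i' j)) :
    ∀ i i' : Fin N, u i - u i' ≤ Cmax / γ - Real.log rmin :=
  stmt14_general γ hγ C Cmax hC0 hCmax r rmin hrmin hrle hr1 u v hstat
end
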